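/- Let α > 0, k ∈ ℝ, and let U: ℝ → M₃(ℂ) be a continuous matrix-valued function with ∫_{−∞}^{∞} ‖U(x)‖ dx < ∞. Then there exists a unique bounded continuous function X: ℝ → M₃(ℂ) satisfying the Volterra integral equation X(x) = I₃ − ∫ₓ^∞ e^{(ik(x−y)/(12α))Σ}·U(y)·X(y)·e^{−(ik(x−y)/(12α))Σ} dy for all x ∈ ℝ. -/

import Mathlib

/-!
The equation is the Volterra equation `X = 1 + 𝒦 X` with `(𝒦 X)(x) = ∫_x^∞ K(x, y) (X y) dy`,
where `K(x, y) A = -e^{wΣ} U(y) A e^{-wΣ}`. Since `w = ik(x-y)/(12α)` is purely imaginary,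
conjugation by `e^{wΣ}` multiplies every entry by a unimodular factor, so `‖K(x, y)‖ ≤ u(y)`
for the integrable weight `u = ∑ᵢⱼ |Uᵢⱼ|`. With `φ(x) = ∫_x^∞ u`, induction on `n` gives
`|𝒦ⁿX - 𝒦ⁿX'|(x) ≤ φ(x)ⁿ / n! · ‖X - X'‖`, because `∫_x^∞ φⁿ u = φ(x)ⁿ⁺¹ / (n + 1)`.
Hence some iterate of `X ↦ 1 + 𝒦 X` is a contraction of the Banach space of bounded
continuous functions, and it has exactly one fixed point.
-/

open Complex MeasureTheory

/-- `e^{wΣ}` for `Σ = diag(−2,1,1)`. -/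
noncomputable def expSigma (w : ℂ) : Matrix (Fin 3) (Fin 3) ℂ :=
  Matrix.diagonal ![Complex.exp (-2 * w), Complex.exp w, Complex.exp w]

open Set Filter Topology Function BoundedContinuousFunction
open scoped Nat

section TailIntegral

variable {u : ℝ → ℝ}

theorem integral_Ioi_eq_sub_intervalIntegral (hu : Integrable u) (x : ℝ) :
    ∫ y in Ioi x, u y = (∫ y in Ioi 0, u y) - ∫ y in (0 : ℝ)..x, u y := by
  rw [← intervalIntegral.integral_Ioi_sub_Ioi' hu.integrableOn hu.integrableOn, sub_sub_cancel]

theorem hasDerivAt_integral_Ioi (hu : Integrable u) (huc : Continuous u) (x : ℝ) :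
    HasDerivAt (fun x => ∫ y in Ioi x, u y) (-u x) x := by
  have hprim : HasDerivAt (fun x => ∫ y in (0 : ℝ)..x, u y) (u x) x :=
    intervalIntegral.integral_hasDerivAt_right hu.intervalIntegrable
      huc.stronglyMeasurable.stronglyMeasurableAtFilter huc.continuousAt
  simpa [funext (integral_Ioi_eq_sub_intervalIntegral hu)] using hprim.const_sub _

theorem tendsto_integral_Ioi_atTop (hu : Integrable u) :
    Tendsto (fun x => ∫ y in Ioi x, u y) atTop (𝓝 0) := by
  have := (intervalIntegral_tendsto_integral_Ioi 0 hu.integrableOn tendsto_id).const_sub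
    (∫ y in Ioi 0, u y)
  simpa [funext (integral_Ioi_eq_sub_intervalIntegral hu)] using this

theorem hasDerivAt_neg_integral_Ioi_pow_succ_div (hu : Integrable u) (huc : Continuous u)
    (n : ℕ) (x : ℝ) :
    HasDerivAt (fun t => -((∫ z in Ioi t, u z) ^ (n + 1) / (n + 1)))
      ((∫ z in Ioi x, u z) ^ n * u x) x :=
  (((hasDerivAt_integral_Ioi hu huc x).fun_pow (n + 1)).div_const ((n : ℝ) + 1)).fun_neg.congr_deriv
    (by push_cast; field_simp)

theorem tendsto_neg_integral_Ioi_pow_succ_div_atTop (hu : Integrable u) (n : ℕ) :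
    Tendsto (fun t => -((∫ z in Ioi t, u z) ^ (n + 1) / (n + 1))) atTop (𝓝 0) := by
  simpa using (((tendsto_integral_Ioi_atTop hu).pow (n + 1)).div_const ((n : ℝ) + 1)).neg

theorem integral_Ioi_nonneg (hu0 : ∀ y, 0 ≤ u y) (x : ℝ) : 0 ≤ ∫ y in Ioi x, u y :=
  setIntegral_nonneg measurableSet_Ioi fun y _ => hu0 y

variable (hu : Integrable u) (huc : Continuous u) (hu0 : ∀ y, 0 ≤ u y)
include hu huc hu0

theorem integrableOn_integral_Ioi_pow_mul (n : ℕ) (x : ℝ) :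
    IntegrableOn (fun y => (∫ z in Ioi y, u z) ^ n * u y) (Ioi x) :=
  integrableOn_Ioi_deriv_of_nonneg'
    (fun y _ => hasDerivAt_neg_integral_Ioi_pow_succ_div hu huc n y)
    (fun y _ => mul_nonneg (pow_nonneg (integral_Ioi_nonneg hu0 y) n) (hu0 y))
    (tendsto_neg_integral_Ioi_pow_succ_div_atTop hu n)

theorem integral_Ioi_integral_Ioi_pow_mul (n : ℕ) (x : ℝ) :
    ∫ y in Ioi x, (∫ z in Ioi y, u z) ^ n * u y = (∫ y in Ioi x, u y) ^ (n + 1) / (n + 1) := by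
  rw [integral_Ioi_of_hasDerivAt_of_nonneg'
    (fun y _ => hasDerivAt_neg_integral_Ioi_pow_succ_div hu huc n y)
    (fun y _ => mul_nonneg (pow_nonneg (integral_Ioi_nonneg hu0 y) n) (hu0 y))
    (tendsto_neg_integral_Ioi_pow_succ_div_atTop hu n)]
  simp

end TailIntegral

section Volterra

variable {E : Type*} [NormedAddCommGroup E] [NormedSpace ℝ E]

theorem continuous_integral_Ioi_of_dominated {F : ℝ → ℝ → E} (hF : Continuous (uncurry F))
    {g : ℝ → ℝ} (hg : Integrable g) (hFg : ∀ x y, ‖F x y‖ ≤ g y) :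
    Continuous fun x => ∫ y in Ioi x, F x y := by
  refine continuous_iff_continuousAt.2 fun x₀ => ?_
  -- `x ↦ (Ioi x).indicator (F x) y` is continuous at `x₀` unless `y = x₀`, a null set.
  simp_rw [← integral_indicator measurableSet_Ioi]
  refine continuousAt_of_dominated (bound := g)
    (Eventually.of_forall fun x =>
      (hF.comp (Continuous.prodMk_right x)).aestronglyMeasurable.indicator measurableSet_Ioi)
    (Eventually.of_forall fun x => ae_of_all _ fun y =>
      (norm_indicator_le_norm_self _ _).trans (hFg x y)) hg ?_
  filter_upwards [compl_mem_ae_iff.2 (measure_singleton x₀)] with y (hy : y ≠ x₀)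
  rcases hy.lt_or_gt with hlt | hgt
  · refine (continuousAt_const (y := (0 : E))).congr ?_
    filter_upwards [Ioi_mem_nhds hlt] with x hx
    exact (indicator_of_notMem (notMem_Ioi.2 (le_of_lt hx)) _).symm
  · refine (hF.comp (Continuous.prodMk_left y)).continuousAt.congr ?_
    filter_upwards [Iio_mem_nhds hgt] with x hx
    exact (indicator_of_mem (show y ∈ Ioi x from hx) _).symm

variable {K : ℝ → ℝ → E →L[ℝ] E} {u : ℝ → ℝ}

theorem norm_integral_Ioi_kernel_le (hKu : ∀ x y, ‖K x y‖ ≤ u y) {X : ℝ → E} {b : ℝ → ℝ}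
    (hXb : ∀ y, ‖X y‖ ≤ b y) (x : ℝ) (hub : IntegrableOn (fun y => u y * b y) (Ioi x)) :
    ‖∫ y in Ioi x, K x y (X y)‖ ≤ ∫ y in Ioi x, u y * b y :=
  norm_integral_le_of_norm_le hub <| ae_of_all _ fun y =>
    (K x y).le_of_opNorm_le_of_le (hKu x y) (hXb y)

variable (hK : Continuous (uncurry K)) (hu : Integrable u) (hKu : ∀ x y, ‖K x y‖ ≤ u y)
include hK hu hKu

theorem integrable_kernel_apply {X : ℝ → E} (hX : Continuous X) {B : ℝ} (hXB : ∀ y, ‖X y‖ ≤ B)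
    (x : ℝ) : Integrable fun y => K x y (X y) :=
  (hu.mul_const B).mono' ((hK.comp (Continuous.prodMk_right x)).clm_apply hX).aestronglyMeasurable
    (ae_of_all _ fun y => (K x y).le_of_opNorm_le_of_le (hKu x y) (hXB y))

theorem exists_volterraOperator (F : ℝ →ᵇ E) :
    ∃ T : (ℝ →ᵇ E) → ℝ →ᵇ E, ∀ X x, T X x = F x + ∫ y in Ioi x, K x y (X y) := by
  have hu0 : ∀ y, 0 ≤ u y := fun y => (norm_nonneg _).trans (hKu 0 y)
  refine ⟨fun X => .ofNormedAddCommGroup _ (F.continuous.add ?_) (‖F‖ + (∫ y, u y) * ‖X‖)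
    fun x => ?_, fun _ _ => rfl⟩
  · exact continuous_integral_Ioi_of_dominated (hK.clm_apply (X.continuous.comp continuous_snd))
      (hu.mul_const ‖X‖) fun x y => (K x y).le_of_opNorm_le_of_le (hKu x y) (X.norm_coe_le_norm y)
  · refine (norm_add_le _ _).trans (add_le_add (F.norm_coe_le_norm x) ?_)
    calc ‖∫ y in Ioi x, K x y (X y)‖ ≤ ∫ y in Ioi x, u y * ‖X‖ :=
          norm_integral_Ioi_kernel_le hKu X.norm_coe_le_norm x (hu.mul_const _).integrableOn
      _ ≤ (∫ y, u y) * ‖X‖ := by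
          rw [integral_mul_const]
          exact mul_le_mul_of_nonneg_right
            (setIntegral_le_integral hu (ae_of_all _ hu0)) (norm_nonneg _)

theorem norm_integral_Ioi_kernel_sub_le {X X' : ℝ → E} (hX : Continuous X) (hX' : Continuous X')
    {B B' : ℝ} (hXB : ∀ y, ‖X y‖ ≤ B) (hXB' : ∀ y, ‖X' y‖ ≤ B') {b : ℝ → ℝ}
    (hXb : ∀ y, ‖X y - X' y‖ ≤ b y) (x : ℝ) (hub : IntegrableOn (fun y => u y * b y) (Ioi x)) :
    ‖(∫ y in Ioi x, K x y (X y)) - ∫ y in Ioi x, K x y (X' y)‖ ≤ ∫ y in Ioi x, u y * b y := by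
  rw [← integral_sub (integrable_kernel_apply hK hu hKu hX hXB x).integrableOn
    (integrable_kernel_apply hK hu hKu hX' hXB' x).integrableOn]
  simp_rw [← map_sub]
  exact norm_integral_Ioi_kernel_le hKu hXb x hub

variable (huc : Continuous u) {F : ℝ →ᵇ E} {T : (ℝ →ᵇ E) → ℝ →ᵇ E}
  (hT : ∀ X x, T X x = F x + ∫ y in Ioi x, K x y (X y))
include huc hT

theorem norm_iterate_volterraOperator_sub_le (n : ℕ) (X X' : ℝ →ᵇ E) (x : ℝ) :
    ‖T^[n] X x - T^[n] X' x‖ ≤ (∫ y in Ioi x, u y) ^ n / n ! * dist X X' := by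
  have hu0 : ∀ y, 0 ≤ u y := fun y => (norm_nonneg _).trans (hKu 0 y)
  induction n generalizing x with
  | zero => simpa [← dist_eq_norm] using dist_coe_le_dist (f := X) (g := X') x
  | succ n ih =>
    set A := T^[n] X
    set A' := T^[n] X'
    have hub : IntegrableOn
        (fun y => u y * ((∫ z in Ioi y, u z) ^ n / n ! * dist X X')) (Ioi x) :=
      IntegrableOn.congr_fun
        ((integrableOn_integral_Ioi_pow_mul hu huc hu0 n x).mul_const (dist X X' / n !))
        (fun y _ => by ring) measurableSet_Ioi
    rw [iterate_succ_apply', iterate_succ_apply', hT, hT, add_sub_add_left_eq_sub]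
    refine (norm_integral_Ioi_kernel_sub_le hK hu hKu A.continuous A'.continuous
      A.norm_coe_le_norm A'.norm_coe_le_norm ih x hub).trans_eq ?_
    calc ∫ y in Ioi x, u y * ((∫ z in Ioi y, u z) ^ n / n ! * dist X X')
        = (∫ y in Ioi x, (∫ z in Ioi y, u z) ^ n * u y) * (dist X X' / n !) := by
          rw [← integral_mul_const]
          exact setIntegral_congr_fun measurableSet_Ioi fun y _ => by ring
      _ = (∫ y in Ioi x, u y) ^ (n + 1) / (n + 1)! * dist X X' := by
          rw [integral_Ioi_integral_Ioi_pow_mul hu huc hu0, Nat.factorial_succ]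
          push_cast
          field_simp

theorem dist_iterate_volterraOperator_le (n : ℕ) (X X' : ℝ →ᵇ E) :
    dist (T^[n] X) (T^[n] X') ≤ (∫ y, u y) ^ n / n ! * dist X X' := by
  have hu0 : ∀ y, 0 ≤ u y := fun y => (norm_nonneg _).trans (hKu 0 y)
  have hint : 0 ≤ ∫ y, u y := integral_nonneg hu0
  refine (dist_le (by positivity)).2 fun x => ?_
  rw [dist_eq_norm]
  refine (norm_iterate_volterraOperator_sub_le hK hu hKu huc hT n X X' x).trans ?_
  have htail : ∫ y in Ioi x, u y ≤ ∫ y, u y := setIntegral_le_integral hu (ae_of_all _ hu0)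
  have htail0 := integral_Ioi_nonneg hu0 x
  gcongr

theorem exists_contractingWith_iterate_volterraOperator :
    ∃ (n : ℕ) (c : NNReal), ContractingWith c T^[n] := by
  have hu0 : ∀ y, 0 ≤ u y := fun y => (norm_nonneg _).trans (hKu 0 y)
  obtain ⟨n, hn⟩ := ((tendsto_order.1
    (FloorSemiring.tendsto_pow_div_factorial_atTop (∫ y, u y))).2 1 one_pos).exists
  have hint : 0 ≤ ∫ y, u y := integral_nonneg hu0
  have hc : 0 ≤ (∫ y, u y) ^ n / n ! := by positivity
  refine ⟨n, ⟨_, hc⟩, hn, LipschitzWith.of_dist_le_mul fun X X' => ?_⟩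
  exact dist_iterate_volterraOperator_le hK hu hKu huc hT n X X'

end Volterra

theorem existsUnique_volterra {E : Type*} [NormedAddCommGroup E] [NormedSpace ℝ E]
    [CompleteSpace E] {K : ℝ → ℝ → E →L[ℝ] E} {u : ℝ → ℝ} (hK : Continuous (uncurry K))
    (hu : Integrable u) (huc : Continuous u) (hKu : ∀ x y, ‖K x y‖ ≤ u y) (F : ℝ →ᵇ E) :
    ∃! X : ℝ →ᵇ E, ∀ x, X x = F x + ∫ y in Ioi x, K x y (X y) := by
  obtain ⟨T, hT⟩ := exists_volterraOperator hK hu hKu F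
  obtain ⟨n, c, hcontr⟩ := exists_contractingWith_iterate_volterraOperator hK hu hKu huc hT
  have hfix : ∀ X, IsFixedPt T X ↔ ∀ x, X x = F x + ∫ y in Ioi x, K x y (X y) := fun X => by
    simp only [IsFixedPt, BoundedContinuousFunction.ext_iff, hT, eq_comm]
  exact ⟨_, (hfix _).1 hcontr.isFixedPt_fixedPoint_iterate,
    fun X hX => hcontr.fixedPoint_unique (((hfix X).2 hX).iterate n)⟩

theorem Matrix.norm_diagonal_mul_mul_diagonal_apply {n α : Type*} [Fintype n] [DecidableEq n]
    [NormedRing α] [NormMulClass α] {d e : n → α} (hd : ∀ i, ‖d i‖ = 1) (he : ∀ j, ‖e j‖ = 1)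
    (B : Matrix n n α) (i j : n) : ‖(diagonal d * B * diagonal e) i j‖ = ‖B i j‖ := by
  rw [Matrix.mul_diagonal, Matrix.diagonal_mul, norm_mul, norm_mul, hd, he, one_mul, mul_one]

theorem Matrix.norm_mul_apply_le_pi_norm {n α : Type*} [Fintype n] [NormedRing α]
    (B : Matrix n n α) (A : n → n → α) (i j : n) :
    ‖(B * Matrix.of A) i j‖ ≤ (∑ l, ‖B i l‖) * ‖A‖ := by
  rw [Matrix.mul_apply, Finset.sum_mul]
  exact norm_sum_le_of_le _ fun l _ => (norm_mul_le _ _).trans <| by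
    gcongr
    exact (norm_le_pi_norm (A l) j).trans (norm_le_pi_norm A l)

theorem integrable_sum_norm_apply {m n : Type*} [Fintype m] [Fintype n] {μ : Measure ℝ}
    {U : ℝ → Matrix m n ℂ} (hU : ∀ i j, Integrable (fun x => U x i j) μ) :
    Integrable (fun x => ∑ i, ∑ j, ‖U x i j‖) μ :=
  integrable_finsetSum _ fun i _ => integrable_finsetSum _ fun j _ => (hU i j).norm

theorem norm_expSigma_diag {w : ℂ} (hw : w.re = 0) (i : Fin 3) :
    ‖(![Complex.exp (-2 * w), Complex.exp w, Complex.exp w] : Fin 3 → ℂ) i‖ = 1 := by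
  fin_cases i <;> simp [Complex.norm_exp, hw]

theorem continuous_expSigma : Continuous expSigma := by
  unfold expSigma
  fun_prop

/-- Matrices are fed to the kernel as elements of `Fin 3 → Fin 3 → ℂ`, whose sup norm makes the
bounded continuous functions a Banach space (`Matrix` itself carries no norm instance). -/
noncomputable def sigmaKernel (α k : ℝ) (U : ℝ → Matrix (Fin 3) (Fin 3) ℂ) (x y : ℝ) :
    (Fin 3 → Fin 3 → ℂ) →L[ℝ] Fin 3 → Fin 3 → ℂ :=
  LinearMap.toContinuousLinearMap
    { toFun := fun A => Matrix.of.symm (-(expSigma (I * k * (x - y) / (12 * α)) *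
        (U y * Matrix.of A) * expSigma (-(I * k * (x - y) / (12 * α)))))
      map_add' := fun A A' => by
        rw [← Matrix.of_add_of, Matrix.mul_add, Matrix.mul_add, Matrix.add_mul, neg_add]; rfl
      map_smul' := fun c A => by
        rw [← Matrix.smul_of, Matrix.mul_smul, Matrix.mul_smul, Matrix.smul_mul, ← smul_neg]; rfl }

variable {α k : ℝ} {U : ℝ → Matrix (Fin 3) (Fin 3) ℂ}

theorem sigmaKernel_apply (x y : ℝ) (A : Fin 3 → Fin 3 → ℂ) :
    sigmaKernel α k U x y A = Matrix.of.symm (-(expSigma (I * k * (x - y) / (12 * α)) *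
      (U y * Matrix.of A) * expSigma (-(I * k * (x - y) / (12 * α))))) := rfl

theorem continuous_sigmaKernel (hU : Continuous U) : Continuous (uncurry (sigmaKernel α k U)) := by
  refine continuous_clm_apply.2 fun A => ?_
  have hw : Continuous fun p : ℝ × ℝ => I * k * (p.1 - p.2) / (12 * α) := by fun_prop
  exact (((continuous_expSigma.comp hw).matrix_mul ((hU.comp continuous_snd).matrix_mul
    continuous_const)).matrix_mul (continuous_expSigma.comp hw.neg)).neg

theorem norm_sigmaKernel_le (x y : ℝ) : ‖sigmaKernel α k U x y‖ ≤ ∑ i, ∑ j, ‖U y i j‖ := by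
  refine ContinuousLinearMap.opNorm_le_bound _ (by positivity) fun A => ?_
  refine (pi_norm_le_iff_of_nonneg (by positivity)).2 fun i =>
    (pi_norm_le_iff_of_nonneg (by positivity)).2 fun j => ?_
  have hw : (I * k * (x - y) / (12 * α)).re = 0 := by simp [Complex.div_re]
  have hw' : (-(I * k * (x - y) / (12 * α))).re = 0 := by simp [hw]
  rw [sigmaKernel_apply, Matrix.of_symm_apply, Matrix.neg_apply, norm_neg, expSigma, expSigma,
    Matrix.norm_diagonal_mul_mul_diagonal_apply (norm_expSigma_diag hw) (norm_expSigma_diag hw')]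
  refine (Matrix.norm_mul_apply_le_pi_norm (U y) A i j).trans ?_
  exact mul_le_mul_of_nonneg_right (Finset.single_le_sum (f := fun i => ∑ l, ‖U y i l‖)
    (fun _ _ => by positivity) (Finset.mem_univ i)) (norm_nonneg _)

theorem setIntegral_sigmaKernel_apply_apply {Z : ℝ → Fin 3 → Fin 3 → ℂ} {x : ℝ}
    (hint : IntegrableOn (fun y => sigmaKernel α k U x y (Z y)) (Ioi x)) (i j : Fin 3) :
    (∫ y in Ioi x, sigmaKernel α k U x y (Z y)) i j =
      -∫ y in Ioi x, (expSigma (I * k * (x - y) / (12 * α)) * (U y * Matrix.of (Z y)) *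
        expSigma (-(I * k * (x - y) / (12 * α)))) i j := by
  rw [eval_integral hint.eval, eval_integral (hint.eval i).eval, ← integral_neg]
  rfl

theorem volterra_sigmaKernel_iff (hU : Continuous U)
    (hUint : ∀ i j : Fin 3, Integrable fun x => U x i j) (Z : ℝ →ᵇ (Fin 3 → Fin 3 → ℂ)) (x : ℝ) :
    Z x = Matrix.of.symm 1 + ∫ y in Ioi x, sigmaKernel α k U x y (Z y) ↔
      Matrix.of (Z x) = 1 - Matrix.of fun i j => ∫ y in Ioi x,
        (expSigma (I * k * (x - y) / (12 * α)) * (U y * Matrix.of (Z y)) *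
          expSigma (-(I * k * (x - y) / (12 * α)))) i j := by
  have hint := (integrable_kernel_apply (continuous_sigmaKernel (α := α) (k := k) hU)
    (integrable_sum_norm_apply hUint) norm_sigmaKernel_le Z.continuous Z.norm_coe_le_norm x
    ).integrableOn (s := Ioi x)
  simp only [funext_iff, ← Matrix.ext_iff, Pi.add_apply, Matrix.sub_apply, Matrix.of_apply,
    setIntegral_sigmaKernel_apply_apply hint, Matrix.of_symm_apply, ← sub_eq_add_neg]

theorem stmt_2_general (α : ℝ) (k : ℝ) (U : ℝ → Matrix (Fin 3) (Fin 3) ℂ)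
    (hUcont : Continuous U)
    (hUint : ∀ i j : Fin 3, Integrable fun x => U x i j) :
    ∃! X : ℝ → Matrix (Fin 3) (Fin 3) ℂ,
      Continuous X ∧ (∃ C : ℝ, ∀ (x : ℝ) (i j : Fin 3), ‖X x i j‖ ≤ C) ∧
        ∀ x : ℝ, X x = 1 - Matrix.of fun i j =>
          ∫ y in Set.Ioi x,
            (expSigma (Complex.I * k * ((x : ℂ) - (y : ℂ)) / (12 * α)) * (U y * X y) *
              expSigma (-(Complex.I * k * ((x : ℂ) - (y : ℂ)) / (12 * α)))) i j := by
  obtain ⟨Z, hZ, huniq⟩ := existsUnique_volterra (continuous_sigmaKernel (α := α) (k := k) hUcont)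
    (integrable_sum_norm_apply hUint) (by fun_prop) norm_sigmaKernel_le (.const ℝ (Matrix.of.symm 1))
  refine ⟨fun x => Matrix.of (Z x), ⟨Z.continuous, ⟨‖Z‖, fun x i j => ?_⟩,
    fun x => (volterra_sigmaKernel_iff hUcont hUint Z x).1 (hZ x)⟩, ?_⟩
  · exact (norm_le_pi_norm _ j).trans ((norm_le_pi_norm _ i).trans (Z.norm_coe_le_norm x))
  · rintro Y ⟨hYc, ⟨C, hC⟩, hY⟩
    have hC0 : 0 ≤ C := (norm_nonneg _).trans (hC 0 0 0)
    let Z' : ℝ →ᵇ (Fin 3 → Fin 3 → ℂ) := .ofNormedAddCommGroup (fun x => Matrix.of.symm (Y x)) hYc C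
      fun x => (pi_norm_le_iff_of_nonneg hC0).2 fun i => (pi_norm_le_iff_of_nonneg hC0).2 (hC x i)
    have hZ' : Z' = Z := huniq Z' fun x => (volterra_sigmaKernel_iff hUcont hUint Z' x).2 (hY x)
    funext x
    rw [← hZ']
    rfl

theorem stmt_2 (α : ℝ) (hα : 0 < α) (k : ℝ) (U : ℝ → Matrix (Fin 3) (Fin 3) ℂ)
    (hUcont : Continuous U)
    (hUint : ∀ i j : Fin 3, Integrable fun x => U x i j) :
    ∃! X : ℝ → Matrix (Fin 3) (Fin 3) ℂ,
      Continuous X ∧ (∃ C : ℝ, ∀ (x : ℝ) (i j : Fin 3), ‖X x i j‖ ≤ C) ∧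
        ∀ x : ℝ, X x = 1 - Matrix.of fun i j =>
          ∫ y in Set.Ioi x,
            (expSigma (Complex.I * k * ((x : ℂ) - (y : ℂ)) / (12 * α)) * (U y * X y) *
              expSigma (-(Complex.I * k * ((x : ℂ) - (y : ℂ)) / (12 * α)))) i j :=
  stmt_2_general α k U hUcont hUint
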